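/- For any real ν_x, ν_y not both zero, the 6×6 matrix ν_x·A_x + ν_y·B_y has eigenvalues 0 (with eigenspace of dimension 2), ±(2/(7√3))·sqrt(ν_x²+ν_y²), and ±(1/7)·sqrt(ν_x²+ν_y²), all real; hence the system ∂_t S + A_x ∂_x S + B_y ∂_y S = 0 is hyperbolic. -/

import Mathlib

/-!
Ordering the unknowns as `(1, 2, 3, 6 | 4, 5)` turns `ν_x A_x + ν_y B_y` into a block
anti-diagonal matrix `[[0, P], [Q, 0]]` with `P` of size `4 × 2`. Such a matrix has
characteristic polynomial `χ` with `χ(X) X² = X⁴ χ_{QP}(X²)`, and the `2 × 2` matrix `QP`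
has eigenvalues `4r/147` and `r/49`, where `r = ν_x² + ν_y²`; this gives the spectrum.
For `r ≠ 0` the matrix `QP` is invertible, so `P` is injective and `Q` surjective, and the
kernel of the block matrix is `ker Q × 0`, of dimension `4 - 2`.
-/

open Matrix

/-- The 6×6 matrix `A_x`. -/
noncomputable def Ax : Matrix (Fin 6) (Fin 6) ℝ :=
  !![0, 0, 0, 1/3 - 3/7, 0, 0;
     0, 0, 0, 1/3 - 1/7, 0, 0;
     0, 0, 0, 1/3 - 3/7, 0, 0;
     0, 1/7, 0, 0, 0, 0;
     0, 0, 0, 0, 0, -1/7;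
     0, 0, 0, 0, -1/7, 0]

/-- The 6×6 matrix `B_y`. -/
noncomputable def By : Matrix (Fin 6) (Fin 6) ℝ :=
  !![0, 0, 0, 0, 1/3 - 1/7, 0;
     0, 0, 0, 0, 1/3 - 3/7, 0;
     0, 0, 0, 0, 1/3 - 3/7, 0;
     0, 0, 0, 0, 0, -1/7;
     1/7, 0, 0, 0, 0, 0;
     0, 0, 0, -1/7, 0, 0]

open Polynomial Module

namespace Matrix

section Charpoly

variable {R : Type*} [CommRing R] {m n : Type*} [Fintype m] [Fintype n] [DecidableEq m]
  [DecidableEq n]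

theorem expand_charpoly (A : Matrix n n R) (k : ℕ) :
    expand R k A.charpoly = (scalar n (X ^ k) - A.map C).det := by
  rw [charpoly, ← AlgHom.coe_toRingHom, RingHom.map_det]
  congr 1
  ext i j
  by_cases h : i = j <;> simp [h]

theorem charpoly_fromBlocks_zero₁₁_zero₂₂ (P : Matrix m n R) (Q : Matrix n m R) :
    (fromBlocks 0 P Q 0).charpoly * X ^ Fintype.card n =
      X ^ Fintype.card m * expand R 2 (Q * P).charpoly := by
  have key : charmatrix (fromBlocks 0 P Q 0) * fromBlocks 1 (P.map C) 0 (scalar n X) =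
      fromBlocks (scalar m X) 0 (-Q.map C) (scalar n (X ^ 2) - (Q * P).map C) := by
    rw [charmatrix_fromBlocks, fromBlocks_multiply]
    congr 1
    · simp
    · ext i j
      simp [diagonal_mul, mul_diagonal]
    · simp
    · simp [Matrix.map_mul, pow_two]
      abel
  have := congrArg det key
  rwa [det_mul, det_fromBlocks_zero₂₁, det_fromBlocks_zero₁₂, det_one, one_mul,
    ← expand_charpoly, ← charpoly, scalar_apply, scalar_apply, det_diagonal, det_diagonal,
    Finset.prod_const, Finset.prod_const] at this

end Charpoly

section Kernel

variable {K : Type*} [Field K] {m n : Type*} [Fintype n]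

theorem rank_add_finrank_ker_mulVecLin (A : Matrix m n K) :
    A.rank + finrank K (LinearMap.ker A.mulVecLin) = Fintype.card n :=
  A.mulVecLin.finrank_range_add_finrank_ker.trans (finrank_pi K)

theorem finrank_ker_toLin'_reindex [Fintype m] [DecidableEq m] [DecidableEq n] (e : m ≃ n)
    (A : Matrix m m K) :
    finrank K (LinearMap.ker (toLin' (reindex e e A))) = finrank K (LinearMap.ker (toLin' A)) := by
  have hA := rank_add_finrank_ker_mulVecLin A
  have hB := rank_add_finrank_ker_mulVecLin (reindex e e A)
  rw [rank_reindex, ← Fintype.card_congr e] at hB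
  rw [toLin'_apply', toLin'_apply']
  exact Nat.add_left_cancel (hB.trans hA.symm)

theorem ker_mulVecLin_fromBlocks_zero₁₁_zero₂₂ [Fintype m] (P : Matrix m n K) (Q : Matrix n m K)
    (hP : Function.Injective P.mulVec) :
    LinearMap.ker (fromBlocks 0 P Q 0).mulVecLin =
      (LinearMap.ker Q.mulVecLin).map
        ((LinearEquiv.sumArrowLequivProdArrow m n K K).symm.toLinearMap ∘ₗ LinearMap.inl K _ _) := by
  ext x
  simp only [LinearMap.mem_ker, mulVecLin_apply, fromBlocks_mulVec, zero_mulVec, zero_add,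
    add_zero, Submodule.mem_map, LinearMap.comp_apply, LinearMap.inl_apply, LinearEquiv.coe_coe]
  constructor
  · intro hx
    have hQ : Q *ᵥ (x ∘ Sum.inl) = 0 := by simpa using congrArg (· ∘ Sum.inr) hx
    have hP0 : P *ᵥ (x ∘ Sum.inr) = 0 := by simpa using congrArg (· ∘ Sum.inl) hx
    have hxr : x ∘ Sum.inr = 0 := hP (by rw [hP0, mulVec_zero])
    refine ⟨x ∘ Sum.inl, hQ, ?_⟩
    ext (i | i)
    · simp
    · simpa using (congrFun hxr i).symm
  · rintro ⟨a, ha, rfl⟩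
    ext (i | i)
    · simp [Function.comp_def, mulVec, dotProduct]
    · simp [Function.comp_def, ha]

theorem finrank_ker_mulVecLin_fromBlocks_zero₁₁_zero₂₂ [Fintype m] [DecidableEq n]
    (P : Matrix m n K) (Q : Matrix n m K) (hQP : IsUnit (Q * P)) :
    finrank K (LinearMap.ker (fromBlocks 0 P Q 0).mulVecLin) =
      Fintype.card m - Fintype.card n := by
  have hP : Function.Injective P.mulVec := by
    refine Function.Injective.of_comp (f := Q.mulVec) ?_
    simpa [Function.comp_def, mulVec_mulVec] using mulVec_injective_iff_isUnit.mpr hQP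
  have hQ : Q.rank = Fintype.card n :=
    le_antisymm (rank_le_card_height Q)
      ((rank_of_isUnit _ hQP).symm.le.trans (rank_mul_le_left Q P))
  have hinj : Function.Injective
      ((LinearEquiv.sumArrowLequivProdArrow m n K K).symm.toLinearMap ∘ₗ LinearMap.inl K _ _) := by
    rw [LinearMap.coe_comp]
    exact (LinearEquiv.injective _).comp LinearMap.inl_injective
  rw [ker_mulVecLin_fromBlocks_zero₁₁_zero₂₂ P Q hP,
    ← (Submodule.equivMapOfInjective _ hinj _).finrank_eq, ← hQ, ← rank_add_finrank_ker_mulVecLin Q]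
  omega

end Kernel

end Matrix

theorem sq_mul_sub_sq_mul_sub_sq_eq_zero_iff {R : Type*} [CommRing R] [NoZeroDivisors R]
    (s t μ : R) :
    μ ^ 2 * (μ ^ 2 - s ^ 2) * (μ ^ 2 - t ^ 2) = 0 ↔
      μ = 0 ∨ μ = s ∨ μ = -s ∨ μ = t ∨ μ = -t := by
  rw [mul_eq_zero, mul_eq_zero, pow_eq_zero_iff two_ne_zero, sub_eq_zero, sub_eq_zero,
    sq_eq_sq_iff_eq_or_eq_neg, sq_eq_sq_iff_eq_or_eq_neg]
  tauto

def blockOrder : Fin 6 ≃ Fin 4 ⊕ Fin 2 where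
  toFun := ![.inl 0, .inl 1, .inl 2, .inr 0, .inr 1, .inl 3]
  invFun := Sum.elim ![0, 1, 2, 5] ![3, 4]
  left_inv := by decide
  right_inv := by decide

noncomputable def blockP (νx νy : ℝ) : Matrix (Fin 4) (Fin 2) ℝ :=
  !![-2/21 * νx, 4/21 * νy; 4/21 * νx, -2/21 * νy; -2/21 * νx, -2/21 * νy; -νy/7, -νx/7]

noncomputable def blockQ (νx νy : ℝ) : Matrix (Fin 2) (Fin 4) ℝ :=
  !![0, νx/7, 0, -νy/7; νy/7, 0, 0, -νx/7]

theorem reindex_smul_Ax_add_smul_By (νx νy : ℝ) :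
    reindex blockOrder blockOrder (νx • Ax + νy • By) =
      fromBlocks 0 (blockP νx νy) (blockQ νx νy) 0 := by
  ext (i | i) (j | j) <;> fin_cases i <;> fin_cases j <;>
    simp [blockOrder, blockP, blockQ, Ax, By] <;> ring

theorem blockQ_mul_blockP (νx νy : ℝ) :
    blockQ νx νy * blockP νx νy =
      !![(4 * νx ^ 2 + 3 * νy ^ 2) / 147, νx * νy / 147;
         νx * νy / 147, (3 * νx ^ 2 + 4 * νy ^ 2) / 147] := by
  ext i j
  fin_cases i <;> fin_cases j <;> simp [blockP, blockQ, mul_apply, Fin.sum_univ_four] <;> ring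

theorem trace_blockQ_mul_blockP (νx νy : ℝ) :
    (blockQ νx νy * blockP νx νy).trace =
      4 / 147 * (νx ^ 2 + νy ^ 2) + 1 / 49 * (νx ^ 2 + νy ^ 2) := by
  simp only [blockQ_mul_blockP, trace_fin_two, of_apply, cons_val', cons_val_zero, cons_val_one,
    cons_val_fin_one]
  ring

theorem det_blockQ_mul_blockP (νx νy : ℝ) :
    (blockQ νx νy * blockP νx νy).det =
      4 / 147 * (νx ^ 2 + νy ^ 2) * (1 / 49 * (νx ^ 2 + νy ^ 2)) := by
  simp only [blockQ_mul_blockP, det_fin_two, of_apply, cons_val', cons_val_zero, cons_val_one,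
    cons_val_fin_one]
  ring

theorem charpoly_blockQ_mul_blockP (νx νy : ℝ) :
    (blockQ νx νy * blockP νx νy).charpoly =
      (X - C (4 / 147 * (νx ^ 2 + νy ^ 2))) * (X - C (1 / 49 * (νx ^ 2 + νy ^ 2))) := by
  rw [charpoly_fin_two, trace_blockQ_mul_blockP, det_blockQ_mul_blockP]
  generalize 4 / 147 * (νx ^ 2 + νy ^ 2) = α
  generalize 1 / 49 * (νx ^ 2 + νy ^ 2) = β
  rw [map_add, map_mul]
  ring

theorem charpoly_smul_Ax_add_smul_By (νx νy : ℝ) :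
    (νx • Ax + νy • By).charpoly =
      X ^ 2 * (X ^ 2 - C (4 / 147 * (νx ^ 2 + νy ^ 2))) *
        (X ^ 2 - C (1 / 49 * (νx ^ 2 + νy ^ 2))) := by
  have h := charpoly_fromBlocks_zero₁₁_zero₂₂ (blockP νx νy) (blockQ νx νy)
  have hreindex := charpoly_reindex blockOrder (νx • Ax + νy • By)
  rw [reindex_smul_Ax_add_smul_By] at hreindex
  simp only [hreindex, charpoly_blockQ_mul_blockP, Fintype.card_fin] at h
  rw [map_mul, map_sub, map_sub, expand_X, expand_C, expand_C] at h
  exact mul_right_cancel₀ (pow_ne_zero 2 X_ne_zero) (h.trans (by ring))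

/-- For `(ν_x, ν_y) ≠ 0`, the matrix `ν_x A_x + ν_y B_y` has real eigenvalues
`0` (with eigenspace of dimension 2), `±(2/(7√3))·√(ν_x²+ν_y²)` and
`±(1/7)·√(ν_x²+ν_y²)`: the system is hyperbolic. -/
theorem AxBy_hyperbolic (νx νy : ℝ) (hν : (νx, νy) ≠ 0) :
    (∀ μ : ℂ, ((νx • Ax + νy • By).map (Complex.ofReal)).charpoly.IsRoot μ ↔
      μ = 0 ∨
      μ = ((2 / (7 * Real.sqrt 3) * Real.sqrt (νx ^ 2 + νy ^ 2) : ℝ) : ℂ) ∨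
      μ = ((-(2 / (7 * Real.sqrt 3)) * Real.sqrt (νx ^ 2 + νy ^ 2) : ℝ) : ℂ) ∨
      μ = (((1 / 7) * Real.sqrt (νx ^ 2 + νy ^ 2) : ℝ) : ℂ) ∨
      μ = ((-(1 / 7) * Real.sqrt (νx ^ 2 + νy ^ 2) : ℝ) : ℂ)) ∧
    Module.finrank ℝ (LinearMap.ker (Matrix.toLin' (νx • Ax + νy • By))) = 2 := by
  have hr : 0 < νx ^ 2 + νy ^ 2 := by
    rcases not_and_or.mp (Prod.mk_eq_zero.not.mp hν) with h | h <;> positivity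
  set s := 2 / (7 * Real.sqrt 3) * Real.sqrt (νx ^ 2 + νy ^ 2)
  set t := 1 / 7 * Real.sqrt (νx ^ 2 + νy ^ 2)
  have hs : s ^ 2 = 4 / 147 * (νx ^ 2 + νy ^ 2) := by
    rw [mul_pow, div_pow, mul_pow, Real.sq_sqrt hr.le, Real.sq_sqrt (by norm_num)]
    ring
  have ht : t ^ 2 = 1 / 49 * (νx ^ 2 + νy ^ 2) := by
    rw [mul_pow, Real.sq_sqrt hr.le]
    ring
  constructor
  · intro μ
    rw [neg_mul, neg_mul, Complex.ofReal_neg, Complex.ofReal_neg,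
      ← sq_mul_sub_sq_mul_sub_sq_eq_zero_iff, show (Complex.ofReal : ℝ → ℂ) = Complex.ofRealHom from rfl,
      charpoly_map, IsRoot, eval_map, charpoly_smul_Ax_add_smul_By, ← hs, ← ht]
    simp only [eval₂_mul, eval₂_sub, eval₂_pow, eval₂_X, eval₂_C, Complex.ofRealHom_eq_coe,
      Complex.ofReal_pow]
  · have hQP : IsUnit (blockQ νx νy * blockP νx νy) := by
      rw [isUnit_iff_isUnit_det, det_blockQ_mul_blockP, isUnit_iff_ne_zero]
      positivity
    rw [← finrank_ker_toLin'_reindex blockOrder, reindex_smul_Ax_add_smul_By, toLin'_apply',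
      finrank_ker_mulVecLin_fromBlocks_zero₁₁_zero₂₂ _ _ hQP]
    simp
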